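/- arXiv:2004.06621 — 2 statements merged into one kernel-verified Lean document; each statement's English description precedes it below -/
import Mathlib

section
/- Let R, Σ, P be symmetric positive definite real n×n matrices and let K = [I + (R + Σ)P⁻¹]⁻¹. Then for every nonzero vector v, the quadratic form v·(P⁻¹ - P⁻¹K)v is positive; equivalently K is a contraction in the P⁻¹-inner-product sense: v·P⁻¹Kv < v·P⁻¹v for all v ≠ 0. -/
open Matrix

lemma conj_posdef {n : ℕ} {A B : Matrix (Fin n) (Fin n) ℝ} (hA : A.PosDef)
    (hB : IsUnit B.det) : (Bᵀ * A * B).PosDef := by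
  refine PosDef.of_dotProduct_mulVec_pos ?_ ?_
  · simp only [Matrix.IsHermitian, conjTranspose_eq_transpose_of_trivial,
      transpose_mul, transpose_transpose]
    have h : Aᵀ = A := by
      have := hA.isHermitian
      rwa [Matrix.IsHermitian, conjTranspose_eq_transpose_of_trivial] at this
    rw [h, Matrix.mul_assoc]
  · intro x hx
    have hBx : B *ᵥ x ≠ 0 := fun h => hx
      ((Matrix.mulVec_injective_iff_isUnit.2 ((isUnit_iff_isUnit_det B).2 hB))
        (by simpa using h))
    have key : x ⬝ᵥ ((Bᵀ * A * B) *ᵥ x) = (B *ᵥ x) ⬝ᵥ (A *ᵥ (B *ᵥ x)) := by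
      rw [Matrix.mul_assoc, ← mulVec_mulVec, dotProduct_mulVec, vecMul_transpose,
        ← mulVec_mulVec]
    have := hA.dotProduct_mulVec_pos hBx
    simp only [star_trivial] at this ⊢
    rw [key]
    exact this

set_option maxHeartbeats 1000000 in
lemma aux_posdef {n : ℕ} {A P : Matrix (Fin n) (Fin n) ℝ}
    (hAs : Aᵀ = A) (hPs : Pᵀ = P) (hApd : A.PosDef) (hPpd : P.PosDef) :
    (P⁻¹ - (P + A)⁻¹).PosDef := by
  have hPdet : IsUnit P.det := isUnit_iff_ne_zero.2 hPpd.det_pos.ne'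
  have hQpd : (P + A).PosDef := hPpd.add hApd
  have hQdet : IsUnit (P + A).det := isUnit_iff_ne_zero.2 hQpd.det_pos.ne'
  have hPP : P * P⁻¹ = 1 := mul_nonsing_inv P hPdet
  have hPP' : P⁻¹ * P = 1 := nonsing_inv_mul P hPdet
  have hQQ : (P + A) * (P + A)⁻¹ = 1 := mul_nonsing_inv _ hQdet
  have hQQ' : (P + A)⁻¹ * (P + A) = 1 := nonsing_inv_mul _ hQdet
  have hQinvT : ((P + A)⁻¹)ᵀ = (P + A)⁻¹ := by
    rw [transpose_nonsing_inv, transpose_add, hPs, hAs]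
  have hMpd : (A + A * P⁻¹ * A).PosDef := by
    have h2 : (Aᵀ * P⁻¹ * A).PosDef :=
      conj_posdef hPpd.inv (isUnit_iff_ne_zero.2 hApd.det_pos.ne')
    rw [hAs] at h2
    exact hApd.add h2
  have expand : (P + A) * P⁻¹ * (P + A) = (P + A) + (A + A * P⁻¹ * A) := by
    have e1 : (P + A) * P⁻¹ * (P + A)
        = P * P⁻¹ * P + P * P⁻¹ * A + A * (P⁻¹ * P) + A * P⁻¹ * A := by noncomm_ring
    rw [e1, hPP, hPP']
    simp only [Matrix.one_mul, Matrix.mul_one]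
    abel
  have hdiff : P⁻¹ - (P + A)⁻¹ = (P + A)⁻¹ * (A + A * P⁻¹ * A) * (P + A)⁻¹ := by
    calc P⁻¹ - (P + A)⁻¹
        = (P + A)⁻¹ * ((P + A) * P⁻¹ * (P + A)) * (P + A)⁻¹ - (P + A)⁻¹ := by
          rw [Matrix.mul_assoc (P + A) _ (P + A), ← Matrix.mul_assoc ((P + A)⁻¹), hQQ',
            Matrix.one_mul, Matrix.mul_assoc, hQQ, Matrix.mul_one]
      _ = (P + A)⁻¹ * (A + A * P⁻¹ * A) * (P + A)⁻¹ := by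
          rw [expand, Matrix.mul_add, Matrix.add_mul, hQQ', Matrix.one_mul]
          abel
  rw [hdiff]
  have h3 := conj_posdef (B := (P + A)⁻¹) hMpd (isUnit_iff_ne_zero.2 hQpd.inv.det_pos.ne')
  rwa [hQinvT] at h3

/-- For symmetric positive definite R, Σ, P and K = (I + (R+Σ)P⁻¹)⁻¹, for every
nonzero v the quadratic form v·(P⁻¹ - P⁻¹K)v is positive, i.e.
v·P⁻¹Kv < v·P⁻¹v. -/
theorem stmt_1 {n : ℕ} (R S P : Matrix (Fin n) (Fin n) ℝ)
    (hR : R.IsSymm) (hS : S.IsSymm) (hP : P.IsSymm)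
    (hRpd : R.PosDef) (hSpd : S.PosDef) (hPpd : P.PosDef)
    (K : Matrix (Fin n) (Fin n) ℝ) (hK : K = (1 + (R + S) * P⁻¹)⁻¹) :
    ∀ v : Fin n → ℝ, v ≠ 0 →
      (0 < v ⬝ᵥ ((P⁻¹ - P⁻¹ * K) *ᵥ v) ∧
       v ⬝ᵥ ((P⁻¹ * K) *ᵥ v) < v ⬝ᵥ (P⁻¹ *ᵥ v)) := by
  have hPdet : IsUnit P.det := isUnit_iff_ne_zero.2 hPpd.det_pos.ne'
  have hPP : P * P⁻¹ = 1 := mul_nonsing_inv P hPdet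
  have hPP' : P⁻¹ * P = 1 := nonsing_inv_mul P hPdet
  have hKval : P⁻¹ * K = (P + (R + S))⁻¹ := by
    have hfact : (P + (R + S)) * P⁻¹ = 1 + (R + S) * P⁻¹ := by
      rw [add_mul, hPP]
    rw [hK, ← hfact, Matrix.mul_inv_rev, nonsing_inv_nonsing_inv P hPdet, ← Matrix.mul_assoc,
      hPP', Matrix.one_mul]
  have hpd : (P⁻¹ - P⁻¹ * K).PosDef := by
    rw [hKval]
    exact aux_posdef (by rw [transpose_add, hR.eq, hS.eq]) hP.eq (hRpd.add hSpd) hPpd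
  intro v hv
  have h1 : 0 < v ⬝ᵥ ((P⁻¹ - P⁻¹ * K) *ᵥ v) := by
    have := hpd.dotProduct_mulVec_pos hv
    simpa using this
  refine ⟨h1, ?_⟩
  rw [sub_mulVec, dotProduct_sub] at h1
  linarith
end

section
/- For symmetric positive semidefinite matrices R, Σ and symmetric positive definite P, the matrix C := [I + (R + Σ)P⁻¹]⁻¹ satisfies: for all v ∈ ℝⁿ, (Cv)·P⁻¹(Cv) ≤ v·P⁻¹v, i.e., C is nonexpansive in the norm induced by P⁻¹. -/
open Matrix

/-- For symmetric PSD R, Σ and symmetric positive definite P, the matrix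
C := (I + (R + Σ)P⁻¹)⁻¹ is nonexpansive in the norm induced by P⁻¹:
(Cv)·P⁻¹(Cv) ≤ v·P⁻¹v for all v. -/
theorem stmt_15 {n : ℕ} (R S P : Matrix (Fin n) (Fin n) ℝ)
    (hR : R.IsSymm) (hS : S.IsSymm) (hP : P.IsSymm)
    (hRpsd : R.PosSemidef) (hSpsd : S.PosSemidef) (hPpd : P.PosDef)
    (C : Matrix (Fin n) (Fin n) ℝ) (hC : C = (1 + (R + S) * P⁻¹)⁻¹) :
    ∀ v : Fin n → ℝ, (C *ᵥ v) ⬝ᵥ (P⁻¹ *ᵥ (C *ᵥ v)) ≤ v ⬝ᵥ (P⁻¹ *ᵥ v) := by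
  intro v
  set Q := R + S with hQdef
  have hQ : Q.PosSemidef := hRpsd.add hSpsd
  have hPQ : (P + Q).PosDef := hPpd.add_posSemidef hQ
  have hPdet : IsUnit P.det := (isUnit_iff_isUnit_det _).1 hPpd.isUnit
  have hPQdet : IsUnit (P + Q).det := (isUnit_iff_isUnit_det _).1 hPQ.isUnit
  have hPPinv : P * P⁻¹ = 1 := Matrix.mul_nonsing_inv _ hPdet
  have hPinvP : P⁻¹ * P = 1 := Matrix.nonsing_inv_mul _ hPdet
  have h1 : (1 : Matrix (Fin n) (Fin n) ℝ) + Q * P⁻¹ = (P + Q) * P⁻¹ := by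
    rw [Matrix.add_mul P Q P⁻¹, hPPinv]
  have hCeq : C = P * (P + Q)⁻¹ := by
    rw [hC, h1, Matrix.mul_inv_rev, Matrix.nonsing_inv_nonsing_inv _ hPdet]
  set w := (P + Q)⁻¹ *ᵥ v with hw
  have hv : v = (P + Q) *ᵥ w := by
    rw [hw, mulVec_mulVec, Matrix.mul_nonsing_inv _ hPQdet, one_mulVec]
  have hCv : C *ᵥ v = P *ᵥ w := by
    rw [hCeq, ← mulVec_mulVec, hw]
  have hPinvCv : P⁻¹ *ᵥ (C *ᵥ v) = w := by
    rw [hCv, mulVec_mulVec, Matrix.nonsing_inv_mul _ hPdet, one_mulVec]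
  clear_value w
  have hsymPQ : (P + Q)ᵀ = P + Q := hP.add (hR.add hS)
  have hvw : (P + Q) *ᵥ w = w ᵥ* (P + Q) := by
    conv_lhs => rw [← hsymPQ]
    rw [Matrix.mulVec_transpose]
  have hLHS : (C *ᵥ v) ⬝ᵥ (P⁻¹ *ᵥ (C *ᵥ v)) = w ⬝ᵥ (P *ᵥ w) := by
    rw [hPinvCv, hCv, dotProduct_comm]
  have hRHS : v ⬝ᵥ (P⁻¹ *ᵥ v) = w ⬝ᵥ (((P + Q) * P⁻¹ * (P + Q)) *ᵥ w) := by
    conv_lhs => rw [hv, mulVec_mulVec, hvw, ← Matrix.dotProduct_mulVec, mulVec_mulVec,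
      ← Matrix.mul_assoc]
  have hexp : (P + Q) * P⁻¹ * (P + Q) = P + (Q + Q + Q * P⁻¹ * Q) := by
    rw [Matrix.add_mul P Q P⁻¹, hPPinv, Matrix.add_mul, one_mul, Matrix.mul_add,
      Matrix.mul_assoc Q P⁻¹ P, hPinvP, Matrix.mul_one]
    abel
  have hQQ : Q ᴴ = Q := hQ.isHermitian
  have hcong : (Q * P⁻¹ * Q).PosSemidef := by
    have := hPpd.inv.posSemidef.mul_mul_conjTranspose_same Q
    rwa [hQQ] at this
  have hsum : (Q + Q + Q * P⁻¹ * Q).PosSemidef := (hQ.add hQ).add hcong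
  have hnn : 0 ≤ w ⬝ᵥ ((Q + Q + Q * P⁻¹ * Q) *ᵥ w) := by
    simpa using hsum.dotProduct_mulVec_nonneg w
  rw [hLHS, hRHS, hexp, add_mulVec, dotProduct_add]
  linarith
end
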